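/- Combining the previous two identities: if a : Matrix (Fin m) (Fin m) ℂ is Hermitian positive definite, c : Fin m → Fin k → Fin k → ℂ is antisymmetric in its last two indices, d : Fin m → Fin k → Fin k → ℂ satisfies ∑_r d i r r = 0 for all i, and for all r s : Fin k we have ∑_{i,j} a i j * (d i r r * conj(d j s s) − d i s r * conj(d j s r) + d i s s * conj(d j r r) − d i r s * conj(d j r s) + c i r s * conj(c j s r)) = 0, then c = 0 and d = 0. -/

import Mathlib

open scoped BigOperators ComplexOrder

/-!
Read the SKT identity through the Hermitian form `B u v = ∑ i j, a i j * (u i * conj (v j))`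
applied to the slices `d · r s` and `c · r s`, and sum it over all `r, s`. The two trace terms
vanish by the balanced condition `∑ r, d i r r = 0`, the two middle terms coincide after swapping
`r` and `s`, and antisymmetry of `c` turns `B (c · r s) (c · s r)` into `-B (c · r s) (c · r s)`.
What is left says that `∑ r s, (2 * B (d · r s) (d · r s) + B (c · r s) (c · r s))` vanishes. Since
`a` is positive definite every term is nonnegative, hence zero, and so is every slice.
-/

open Finset Matrix

namespace Matrix

variable {n R : Type*} [Fintype n] [DecidableEq n] [CommRing R] [StarRing R]

theorem toLinearMapₛₗ₂'_starRingEnd_apply (a : Matrix n n R) (u v : n → R) :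
    toLinearMapₛₗ₂' R (RingHom.id R) (starRingEnd R) a u v
      = ∑ i, ∑ j, a i j * (u i * starRingEnd R (v j)) := by
  simp only [toLinearMapₛₗ₂'_apply, RingHom.id_apply, smul_eq_mul]
  exact sum_congr rfl fun i _ => sum_congr rfl fun j _ => by ring

theorem toLinearMapₛₗ₂'_starRingEnd_apply' (a : Matrix n n R) (u v : n → R) :
    toLinearMapₛₗ₂' R (RingHom.id R) (starRingEnd R) a u v = u ⬝ᵥ a *ᵥ star v := by
  simp only [toLinearMapₛₗ₂'_starRingEnd_apply, dotProduct, mulVec, mul_sum]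
  exact sum_congr rfl fun i _ => sum_congr rfl fun j _ => by
    simp only [starRingEnd_apply, Pi.star_apply]; ring

variable [PartialOrder R]

theorem PosSemidef.toLinearMapₛₗ₂'_apply_self_nonneg {a : Matrix n n R} (ha : a.PosSemidef)
    (u : n → R) : 0 ≤ toLinearMapₛₗ₂' R (RingHom.id R) (starRingEnd R) a u u := by
  simpa [toLinearMapₛₗ₂'_starRingEnd_apply'] using ha.dotProduct_mulVec_nonneg (star u)

theorem PosDef.toLinearMapₛₗ₂'_apply_self_eq_zero_iff {a : Matrix n n R} (ha : a.PosDef)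
    {u : n → R} : toLinearMapₛₗ₂' R (RingHom.id R) (starRingEnd R) a u u = 0 ↔ u = 0 := by
  refine ⟨fun h => ?_, fun h => by simp [h]⟩
  by_contra hu
  have hpos := ha.dotProduct_mulVec_pos (star_ne_zero.mpr hu)
  rw [star_star, ← toLinearMapₛₗ₂'_starRingEnd_apply', h] at hpos
  exact hpos.false

end Matrix

theorem LinearMap.sum_sum_skt_eq {ι R M : Type*} [Fintype ι] [CommRing R] [StarRing R]
    [AddCommGroup M] [Module R M] (B : M →ₗ[R] M →ₗ⋆[R] R) (C D : ι → ι → M)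
    (hC : ∀ r s, C r s = -C s r) (hD : ∑ r, D r r = 0) :
    ∑ r, ∑ s, (B (D r r) (D s s) - B (D s r) (D s r) + B (D s s) (D r r) - B (D r s) (D r s)
        + B (C r s) (C s r))
      = -∑ r, ∑ s, (2 * B (D r s) (D r s) + B (C r s) (C r s)) := by
  have htrace : ∑ r, ∑ s, B (D r r) (D s s) = 0 := by simp [← map_sum, hD]
  have htrace' : ∑ r, ∑ s, B (D s s) (D r r) = 0 := by
    simp only [← LinearMap.sum_apply, ← map_sum, hD, map_zero, LinearMap.zero_apply,
      sum_const_zero]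
  have hswap : ∑ r, ∑ s, B (D s r) (D s r) = ∑ r, ∑ s, B (D r s) (D r s) := sum_comm
  have hanti : ∀ r s, B (C r s) (C s r) = -B (C r s) (C r s) := fun r s => by
    rw [hC s r, map_neg]
  simp only [sum_add_distrib, sum_sub_distrib, htrace, htrace', hswap, hanti, sum_neg_distrib,
    ← mul_sum]
  ring

theorem skt_balanced_main_algebraic
    {m k : ℕ} (a : Matrix (Fin m) (Fin m) ℂ) (ha : a.PosDef)
    (c d : Fin m → Fin k → Fin k → ℂ)
    (hc : ∀ i r s, c i r s = - c i s r)
    (hbal : ∀ i : Fin m, ∑ r : Fin k, d i r r = 0)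
    (hSKT : ∀ r s : Fin k, ∑ i : Fin m, ∑ j : Fin m, a i j *
        (d i r r * (starRingEnd ℂ) (d j s s)
          - d i s r * (starRingEnd ℂ) (d j s r)
          + d i s s * (starRingEnd ℂ) (d j r r)
          - d i r s * (starRingEnd ℂ) (d j r s)
          + c i r s * (starRingEnd ℂ) (c j s r)) = 0) :
    c = 0 ∧ d = 0 := by
  set B := toLinearMapₛₗ₂' ℂ (RingHom.id ℂ) (starRingEnd ℂ) a
  set C : Fin k → Fin k → Fin m → ℂ := fun r s i => c i r s
  set D : Fin k → Fin k → Fin m → ℂ := fun r s i => d i r s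
  have hsum : ∑ r, ∑ s, (2 * B (D r s) (D r s) + B (C r s) (C r s)) = 0 := by
    rw [← neg_eq_zero, ← LinearMap.sum_sum_skt_eq B C D (fun r s => funext (hc · r s))
      (funext fun i => by simpa [D] using hbal i)]
    refine sum_eq_zero fun r _ => sum_eq_zero fun s _ => ?_
    simpa only [B, toLinearMapₛₗ₂'_starRingEnd_apply, ← sum_add_distrib, ← sum_sub_distrib,
      ← mul_add, ← mul_sub] using hSKT r s
  have hB := ha.posSemidef.toLinearMapₛₗ₂'_apply_self_nonneg
  have hD2 : ∀ r s, 0 ≤ 2 * B (D r s) (D r s) := fun r s => mul_nonneg zero_le_two (hB _)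
  have hterm : ∀ r s, 2 * B (D r s) (D r s) + B (C r s) (C r s) = 0 := fun r s => by
    have hrow := (Fintype.sum_eq_zero_iff_of_nonneg fun r =>
      sum_nonneg fun s _ => add_nonneg (hD2 r s) (hB _)).mp hsum
    exact congrFun ((Fintype.sum_eq_zero_iff_of_nonneg fun s =>
      add_nonneg (hD2 r s) (hB _)).mp (congrFun hrow r)) s
  have hslice : ∀ r s, C r s = 0 ∧ D r s = 0 := fun r s => by
    obtain ⟨hD, hC⟩ := (add_eq_zero_iff_of_nonneg (hD2 r s) (hB _)).mp (hterm r s)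
    exact ⟨ha.toLinearMapₛₗ₂'_apply_self_eq_zero_iff.mp hC,
      ha.toLinearMapₛₗ₂'_apply_self_eq_zero_iff.mp ((mul_eq_zero.mp hD).resolve_left two_ne_zero)⟩
  constructor <;> funext i r s
  · exact congrFun (hslice r s).1 i
  · exact congrFun (hslice r s).2 i
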